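/- The h-curvature of the Chern connection is related to that of the Cartan connection by R*(X,Y)Z = R(X,Y)Z − C(Fℜ(X,Y), Z), where R is the h-curvature of the Cartan connection, C the Cartan torsion tensor (Ω(C(X,Y),Z) = ½(L_{JX}(J*g))(Y,Z)), F the almost-complex structure and ℜ the Barthel curvature. -/

import Mathlib

/-- Abstract Klein–Grifone setting: the Lie algebra of vector fields on the tangent
bundle `TM` of a manifold `M`, regarded as a module over the smooth functions on `TM`,
together with the natural almost-tangent structure `J`, the Liouville (canonical)
vector field `C`, and the directional-derivative action of vector fields on functions. -/
structure KGSetting where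
  /-- vector fields on TM -/
  VF : Type
  /-- smooth functions on TM -/
  Fn : Type
  [vfLie : LieRing VF]
  [vfAlg : LieAlgebra ℝ VF]
  [fnRing : CommRing Fn]
  [fnAlg : Algebra ℝ Fn]
  [fnModVF : Module Fn VF]
  /-- the directional derivative `X.f` of a function along a vector field -/
  der : VF →ₗ[ℝ] Fn →ₗ[ℝ] Fn
  der_mul : ∀ (X : VF) (f g : Fn), der X (f * g) = der X f * g + f * der X g
  /-- Leibniz rule for the Lie bracket and the `Fn`-module structure -/
  bracket_smul : ∀ (X : VF) (f : Fn) (Y : VF), ⁅X, f • Y⁆ = der X f • Y + f • ⁅X, Y⁆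
  /-- the natural almost-tangent structure -/
  J : VF →ₗ[ℝ] VF
  /-- the Liouville (canonical) vector field -/
  Liouville : VF
  /-- J² = 0 -/
  J_sq : ∀ (X : VF), J (J X) = 0
  /-- the Frölicher–Nijenhuis bracket [J,J] vanishes -/
  JJ : ∀ (X Y : VF), ⁅J X, J Y⁆ = J ⁅J X, Y⁆ + J ⁅X, J Y⁆
  /-- the Frölicher–Nijenhuis bracket [C,J] equals -J -/
  CJ : ∀ (X : VF), ⁅Liouville, J X⁆ = J ⁅Liouville, X⁆ - J X
  /-- the Liouville vector field is vertical -/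
  J_Liouville : J Liouville = 0

attribute [instance] KGSetting.vfLie KGSetting.vfAlg KGSetting.fnRing
  KGSetting.fnAlg KGSetting.fnModVF

/-- A linear connection on `TM` in the Klein–Grifone setting. -/
structure LinConn (K : KGSetting) where
  /-- the covariant derivative `D X Y = ∇_X Y` -/
  D : K.VF → K.VF → K.VF
  addX : ∀ X X' Y, D (X + X') Y = D X Y + D X' Y
  smulX : ∀ (f : K.Fn) X Y, D (f • X) Y = f • D X Y
  addY : ∀ X Y Y', D X (Y + Y') = D X Y + D X Y'
  smulY : ∀ X (f : K.Fn) Y, D X (f • Y) = K.der X f • Y + f • D X Y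

namespace LinConn

variable {K : KGSetting} (N : LinConn K)

/-- the classical torsion `T(X,Y) = ∇_X Y − ∇_Y X − [X,Y]` -/
def tor (X Y : K.VF) : K.VF := N.D X Y - N.D Y X - ⁅X, Y⁆

/-- the classical curvature `K(X,Y)Z = ∇_X ∇_Y Z − ∇_Y ∇_X Z − ∇_{[X,Y]} Z` -/
def curv (X Y Z : K.VF) : K.VF := N.D X (N.D Y Z) - N.D Y (N.D X Z) - N.D ⁅X, Y⁆ Z

end LinConn

/-- A Finsler space `(M,E)` in the Klein–Grifone approach: the canonical spray `S`,
the Barthel connection `Γ = [J,S]` with horizontal/vertical projectors `h`, `v`,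
the associated almost-complex structure `F`, the metric `g(X,Y) = Ω(X,FY)`,
and the Cartan tensors `𝒞` (`Ct`) and `𝒞'` (`Ct'`). -/
structure FinslerKG extends KGSetting where
  /-- the canonical spray -/
  S : VF
  JS : J S = Liouville
  /-- the spray is homogeneous of degree 2: [C,S] = S -/
  S_hom : ⁅Liouville, S⁆ = S
  /-- the Barthel connection -/
  Gam : VF →ₗ[ℝ] VF
  /-- Γ = [J,S] (Frölicher–Nijenhuis bracket) -/
  Gam_def : ∀ (X : VF), Gam X = ⁅J X, S⁆ - J ⁅X, S⁆
  JGam : ∀ (X : VF), J (Gam X) = J X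
  GamJ : ∀ (X : VF), Gam (J X) = - J X
  Gam_sq : ∀ (X : VF), Gam (Gam X) = X
  /-- the Barthel connection is homogeneous: [C,Γ] = 0 -/
  Gam_hom : ∀ (X : VF), ⁅Liouville, Gam X⁆ = Gam ⁅Liouville, X⁆
  /-- horizontal projector h = (I+Γ)/2 -/
  h : VF →ₗ[ℝ] VF
  h_def : ∀ (X : VF), (2:ℝ) • h X = X + Gam X
  /-- vertical projector v = (I−Γ)/2 -/
  v : VF →ₗ[ℝ] VF
  v_def : ∀ (X : VF), (2:ℝ) • v X = X - Gam X
  /-- the Barthel connection has vanishing torsion `t` -/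
  torsion_free : ∀ (X Y : VF), v ⁅J X, h Y⁆ + v ⁅h X, J Y⁆ = J ⁅h X, h Y⁆
  /-- the almost-complex structure of the Barthel connection -/
  F : VF →ₗ[ℝ] VF
  FJ : ∀ (X : VF), F (J X) = h X
  Fh : ∀ (X : VF), F (h X) = - J X
  /-- the metric `g(X,Y) = Ω(X,FY)` on TM -/
  g : VF →ₗ[ℝ] VF →ₗ[ℝ] Fn
  g_symm : ∀ (X Y : VF), g X Y = g Y X
  g_hJ : ∀ (X Y : VF), g (h X) (J Y) = 0
  g_hh : ∀ (X Y : VF), g (h X) (h Y) = g (J X) (J Y)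
  /-- the Cartan tensor 𝒞, `Ω(𝒞(X,Y),Z) = ½(L_{JX}(J*g))(Y,Z)` -/
  Ct : VF →ₗ[ℝ] VF →ₗ[ℝ] VF
  Ct_symm : ∀ (X Y : VF), Ct X Y = Ct Y X
  Ct_sb1 : ∀ (X Y : VF), J (Ct X Y) = 0
  Ct_sb2 : ∀ (X Y : VF), Ct (J X) Y = 0
  Ct_S : ∀ (X : VF), Ct X S = 0
  Ct_def : ∀ (X Y Z : VF), (2:ℝ) • g (Ct X Y) (J Z) =
    der (J X) (g (J Y) (J Z)) - g (J ⁅J X, Y⁆) (J Z) - g (J Y) (J ⁅J X, Z⁆)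
  /-- the Cartan tensor 𝒞', `Ω(𝒞'(X,Y),Z) = ½(L_{hX}g)(JY,JZ)` -/
  Ct' : VF →ₗ[ℝ] VF →ₗ[ℝ] VF
  Ct'_symm : ∀ (X Y : VF), Ct' X Y = Ct' Y X
  Ct'_sb1 : ∀ (X Y : VF), J (Ct' X Y) = 0
  Ct'_sb2 : ∀ (X Y : VF), Ct' (J X) Y = 0
  Ct'_S : ∀ (X : VF), Ct' X S = 0
  Ct'_def : ∀ (X Y Z : VF), (2:ℝ) • g (Ct' X Y) (J Z) =
    der (h X) (g (J Y) (J Z)) - g ⁅h X, J Y⁆ (J Z) - g (J Y) ⁅h X, J Z⁆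

namespace FinslerKG

variable (K : FinslerKG)

/-- the curvature `ℜ(X,Y) = −v[hX,hY]` of the Barthel connection -/
def Rbar (X Y : K.VF) : K.VF := - K.v ⁅K.h X, K.h Y⁆

/-- `∇` is a normal lift of the Barthel connection: `∇J = 0`,
`∇_{JX}JY = J[JX,Y]`, `∇Γ = 0`, and the nonlinear connection induced by `∇`
is the Barthel connection (equivalently `∇C = v`). -/
def IsNormalLift (N : LinConn K.toKGSetting) : Prop :=
  (∀ (X Y : K.VF), N.D X (K.J Y) = K.J (N.D X Y)) ∧
  (∀ (X Y : K.VF), N.D (K.J X) (K.J Y) = K.J ⁅K.J X, Y⁆) ∧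
  (∀ (X Y : K.VF), N.D X (K.Gam Y) = K.Gam (N.D X Y)) ∧
  (∀ (X : K.VF), N.D X K.Liouville = K.v X)

/-- `∇` is horizontally metric: `∇_{hX} g = 0`. -/
def HMetric (N : LinConn K.toKGSetting) : Prop :=
  ∀ (X Y Z : K.VF), K.der (K.h X) (K.g Y Z) =
    K.g (N.D (K.h X) Y) Z + K.g Y (N.D (K.h X) Z)

/-- the classical torsion of `∇` satisfies `J T(hX,hY) = 0`. -/
def JTorFree (N : LinConn K.toKGSetting) : Prop :=
  ∀ (X Y : K.VF), K.J (N.tor (K.h X) (K.h Y)) = 0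

/-- `∇` is the Chern connection of `(M,E)`. -/
def IsChern (N : LinConn K.toKGSetting) : Prop :=
  K.IsNormalLift N ∧ K.HMetric N ∧ K.JTorFree N

/-- the three formulas that completely determine the Chern connection. -/
def ChernEq (N : LinConn K.toKGSetting) : Prop :=
  (∀ (X Y : K.VF), N.D (K.J X) (K.J Y) = K.J ⁅K.J X, Y⁆) ∧
  (∀ (X Y : K.VF), N.D (K.h X) (K.J Y) = K.v ⁅K.h X, K.J Y⁆ + K.Ct' X Y) ∧
  (∀ (X Y : K.VF), N.D X (K.F Y) = K.F (N.D X Y))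

/-- the formulas that completely determine the Cartan connection. -/
def CartanEq (N : LinConn K.toKGSetting) : Prop :=
  (∀ (X Y : K.VF), N.D (K.J X) (K.J Y) = K.J ⁅K.J X, Y⁆ + K.Ct X Y) ∧
  (∀ (X Y : K.VF), N.D (K.h X) (K.J Y) = K.v ⁅K.h X, K.J Y⁆ + K.Ct' X Y) ∧
  (∀ (X Y : K.VF), N.D X (K.F Y) = K.F (N.D X Y))

/-- the formulas that completely determine the Berwald connection. -/
def BerwaldEq (N : LinConn K.toKGSetting) : Prop :=
  (∀ (X Y : K.VF), N.D (K.J X) (K.J Y) = K.J ⁅K.J X, Y⁆) ∧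
  (∀ (X Y : K.VF), N.D (K.h X) (K.J Y) = K.v ⁅K.h X, K.J Y⁆) ∧
  (∀ (X Y : K.VF), N.D X (K.F Y) = K.F (N.D X Y))

/-- the h-curvature `R*(X,Y)Z = K*(hX,hY)JZ` of a connection -/
def Rstar (N : LinConn K.toKGSetting) (X Y Z : K.VF) : K.VF :=
  N.curv (K.h X) (K.h Y) (K.J Z)

/-- the hv-curvature `P*(X,Y)Z = K*(hX,JY)JZ` of a connection -/
def Pstar (N : LinConn K.toKGSetting) (X Y Z : K.VF) : K.VF :=
  N.curv (K.h X) (K.J Y) (K.J Z)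

/-- the covariant derivative `(∇_W 𝒞')(X,Z)` of the Cartan tensor `𝒞'` -/
def DCt' (N : LinConn K.toKGSetting) (W X Z : K.VF) : K.VF :=
  N.D W (K.Ct' X Z) - K.Ct' (N.D W X) Z - K.Ct' X (N.D W Z)

/-- the covariant derivative `(∇_W R)(X,Y)Z` of a vector 3-form (curvature-type tensor) -/
def Dtensor3 (N : LinConn K.toKGSetting) (R : K.VF → K.VF → K.VF → K.VF)
    (W X Y Z : K.VF) : K.VF :=
  N.D W (R X Y Z) - R (N.D W X) Y Z - R X (N.D W Y) Z - R X Y (N.D W Z)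

end FinslerKG

/-!
The Chern and Cartan connections differ only in `D_{JX}JY`, by `𝒞(X,Y)`. Since every vector
field is `F(JW) + J[vW,S]` and both connections commute with `F`, they agree along horizontal
directions, so in `K(hX,hY)JZ` only the term `D_{[hX,hY]}JZ` changes, and only through the
vertical part `v[hX,hY] = −ℜ(X,Y)` of the bracket.
-/

namespace FinslerKG

variable (K : FinslerKG)

lemma h_add_v (W : K.VF) : K.h W + K.v W = W :=
  smul_right_injective K.VF (two_ne_zero : (2 : ℝ) ≠ 0) <| by
    simp only [smul_add, K.h_def, K.v_def]
    rw [two_smul]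
    abel

lemma J_v (W : K.VF) : K.J (K.v W) = 0 :=
  smul_right_injective K.VF (two_ne_zero : (2 : ℝ) ≠ 0) <| by
    simp only [← map_smul, K.v_def, map_sub, K.JGam, sub_self, smul_zero]

lemma Gam_v (W : K.VF) : K.Gam (K.v W) = - K.v W :=
  smul_right_injective K.VF (two_ne_zero : (2 : ℝ) ≠ 0) <| by
    simp only [← map_smul, smul_neg, K.v_def, map_sub, K.Gam_sq]
    abel

lemma J_bracket_v_S (W : K.VF) : K.J ⁅K.v W, K.S⁆ = K.v W := by
  have h := K.Gam_def (K.v W)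
  rw [Gam_v, J_v, zero_lie, zero_sub] at h
  exact (neg_injective h).symm

lemma F_J_add_J_bracket_v_S (W : K.VF) : K.F (K.J W) + K.J ⁅K.v W, K.S⁆ = W := by
  rw [K.FJ, J_bracket_v_S, h_add_v]

lemma Ct_v (W Z : K.VF) : K.Ct (K.v W) Z = 0 := by
  rw [← J_bracket_v_S, K.Ct_sb2]

lemma Ct_F_h (W Z : K.VF) : K.Ct (K.F (K.h W)) Z = 0 := by
  rw [K.Fh, map_neg, LinearMap.neg_apply, K.Ct_sb2, neg_zero]

lemma Ct_F_v (W Z : K.VF) : K.Ct (K.F (K.v W)) Z = K.Ct (K.F W) Z := by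
  conv_rhs => rw [← h_add_v K W]
  rw [map_add, map_add, LinearMap.add_apply, Ct_F_h, zero_add]

lemma Ct_F_J (U Z : K.VF) : K.Ct (K.F (K.J U)) Z = K.Ct U Z := by
  conv_rhs => rw [← h_add_v K U]
  rw [K.FJ, map_add, LinearMap.add_apply, Ct_v, add_zero]

variable {K}

lemma D_eq_of_D_J_eq {N₁ N₂ : LinConn K.toKGSetting} {X : K.VF}
    (hF₁ : ∀ Y, N₁.D X (K.F Y) = K.F (N₁.D X Y)) (hF₂ : ∀ Y, N₂.D X (K.F Y) = K.F (N₂.D X Y))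
    (hJ : ∀ U, N₁.D X (K.J U) = N₂.D X (K.J U)) (W : K.VF) : N₁.D X W = N₂.D X W := by
  rw [← F_J_add_J_bracket_v_S K W, N₁.addY, N₂.addY, hF₁, hF₂, hJ, hJ]

lemma CartanEq.D_h_eq {Nca Nch : LinConn K.toKGSetting} (hca : K.CartanEq Nca)
    (hch : K.ChernEq Nch) (X W : K.VF) : Nca.D (K.h X) W = Nch.D (K.h X) W :=
  D_eq_of_D_J_eq (hca.2.2 _) (hch.2.2 _) (fun U => by rw [hca.2.1, hch.2.1]) W

lemma CartanEq.D_J_eq {Nca Nch : LinConn K.toKGSetting} (hca : K.CartanEq Nca)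
    (hch : K.ChernEq Nch) (W Z : K.VF) :
    Nca.D W (K.J Z) = Nch.D W (K.J Z) + K.Ct (K.F W) Z := by
  have hvert : Nca.D (K.v W) (K.J Z) = Nch.D (K.v W) (K.J Z) + K.Ct (K.F (K.v W)) Z := by
    rw [← J_bracket_v_S K W, hca.1, hch.1, Ct_F_J]
  conv_lhs => rw [← h_add_v K W]
  conv_rhs => rw [← h_add_v K W]
  rw [Nca.addX, Nch.addX, hca.D_h_eq hch, hvert, map_add, map_add, LinearMap.add_apply,
    Ct_F_h, zero_add, add_assoc]

end FinslerKG

/-- The h-curvature of the Chern connection and that of the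
Cartan connection are related by `R*(X,Y)Z = R(X,Y)Z − 𝒞(Fℜ(X,Y), Z)`. -/
theorem chern_h_curvature (K : FinslerKG) (Nch Nca : LinConn K.toKGSetting)
    (hch : K.ChernEq Nch) (hca : K.CartanEq Nca) :
    ∀ X Y Z : K.VF,
      Nch.curv (K.h X) (K.h Y) (K.J Z) =
        Nca.curv (K.h X) (K.h Y) (K.J Z) - K.Ct (K.F (K.Rbar X Y)) Z := by
  intro X Y Z
  simp only [LinConn.curv, FinslerKG.Rbar, hca.D_h_eq hch, hca.D_J_eq hch, map_neg,
    LinearMap.neg_apply, K.Ct_F_v]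
  abel
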